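/- Let d and p be positive integers with p ≥ 2, let k ∈ ℕ, K > 0, and β₁, …, β_p ∈ [0, d/2). Let F : Conf_p → ℝ be a measurable function satisfying the factorized nearest neighbor bound |F(x₁, …, x_p)| ≤ K · ∏_{i=1}^p ⟨x_i⟩^{k} · ∏_{i=1}^p ( min_{j ≠ i} |x_i − x_j| )^{-β_i} for all (x₁, …, x_p) ∈ Conf_p. Then there exists a constant C > 0 such that for every measurable function f : ℝ^{pd} → ℝ with S(f) := sup_{x ∈ ℝ^{pd}} ⟨x⟩^{p(k+d+1)} |f(x)| < ∞, one has ∫_{Conf_p} |f(x₁, …, x_p)| · |F(x₁, …, x_p)| dx₁ ⋯ dx_p ≤ C · S(f) < ∞. In particular, every Schwartz function f on ℝ^{pd} is integrable against F on Conf_p. -/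

import Mathlib

open MeasureTheory

/-- The "inhomogeneous norm" (Japanese bracket) `⟨y⟩ = (1 + |y|²)^{1/2}`. -/
noncomputable def jb {n : ℕ} (y : EuclideanSpace ℝ (Fin n)) : ℝ :=
  (1 + ‖y‖ ^ 2) ^ ((1 : ℝ) / 2)

/-- The nearest-neighbor distance `min_{j ≠ i} |x_i − x_j|`. -/
noncomputable def nnd {d p : ℕ} (x : Fin p → EuclideanSpace ℝ (Fin d)) (i : Fin p) : ℝ :=
  sInf {r : ℝ | ∃ j : Fin p, j ≠ i ∧ r = ‖x i - x j‖}

/-!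
On configurations, `|f| |F| ≤ S K ∏ᵢ ⟨xᵢ⟩^{-(d+1)} ∏ᵢ nndᵢ^{-βᵢ}`, and with `γ = maxᵢ βᵢ` each
`nndᵢ^{-βᵢ}` is at most `∑_{j ≠ i} max(|xᵢ - xⱼ|^{-γ}, 1)`. Expanding the product over `i` gives
one term for each map `σ` with `σ i ≠ i`, i.e. for each functional graph on `p` vertices. A graph
with at most as many edges as vertices has a vertex of degree `≤ 2`; by `ab ≤ a² + b²` the
singular factors at that vertex are dominated by `|t - a|^{-2γ}`, which is locally integrable
since `2γ < d`, so integrating that vertex out costs a constant factor. Peeling off the vertices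
one at a time bounds every term by a constant.
-/

open Finset Metric
open scoped ENNReal

noncomputable def cutoffPow (γ u : ℝ) : ℝ≥0∞ := ENNReal.ofReal (max (u ^ (-γ)) 1)

noncomputable def decayWeight {d : ℕ} (y : EuclideanSpace ℝ (Fin d)) : ℝ≥0∞ :=
  ENNReal.ofReal (jb y ^ (-((d : ℝ) + 1)))

noncomputable def weightMass (d : ℕ) : ℝ≥0∞ := ∫⁻ y : EuclideanSpace ℝ (Fin d), decayWeight y

noncomputable def singularMass (d : ℕ) (γ : ℝ) : ℝ≥0∞ :=
  ∫⁻ y in ball (0 : EuclideanSpace ℝ (Fin d)) 1, ENNReal.ofReal (‖y‖ ^ (-γ))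

noncomputable def vertexBound (d : ℕ) (γ : ℝ) : ℝ≥0∞ :=
  3 * weightMass d + 2 * singularMass d (2 * γ)

@[fun_prop]
lemma measurable_cutoffPow (γ : ℝ) : Measurable (cutoffPow γ) := by
  unfold cutoffPow
  fun_prop

lemma one_le_cutoffPow (γ u : ℝ) : 1 ≤ cutoffPow γ u := by
  simp [cutoffPow]

lemma cutoffPow_sq {u : ℝ} (hu : 0 ≤ u) (γ : ℝ) : cutoffPow γ u ^ 2 = cutoffPow (2 * γ) u := by
  have hsq : (u ^ (-γ)) ^ 2 = u ^ (-(2 * γ)) := by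
    rw [← Real.rpow_natCast, ← Real.rpow_mul hu]
    ring_nf
  have h0 : 0 ≤ u ^ (-γ) := Real.rpow_nonneg hu _
  rw [cutoffPow, cutoffPow, ← ENNReal.ofReal_pow (by positivity), ← hsq]
  rcases le_total (u ^ (-γ)) 1 with h | h
  · rw [max_eq_right h, max_eq_right (by nlinarith)]
    norm_num
  · rw [max_eq_left h, max_eq_left (by nlinarith)]

lemma ofReal_rpow_neg_le_cutoffPow {u β γ : ℝ} (hu : 0 ≤ u) (hβ : 0 ≤ β) (hβγ : β ≤ γ) :
    ENNReal.ofReal (u ^ (-β)) ≤ cutoffPow γ u := by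
  refine ENNReal.ofReal_le_ofReal ?_
  rcases hu.eq_or_lt with rfl | hu0
  · exact (Real.zero_rpow_le_one _).trans (le_max_right _ _)
  rcases le_total u 1 with h1 | h1
  · exact (Real.rpow_le_rpow_of_exponent_ge hu0 h1 (neg_le_neg hβγ)).trans (le_max_left _ _)
  · exact (Real.rpow_le_one_of_one_le_of_nonpos h1 (neg_nonpos.2 hβ)).trans (le_max_right _ _)

lemma cutoffPow_norm_le_indicator_add_one {E : Type*} [SeminormedAddCommGroup E] {γ : ℝ}
    (hγ : 0 ≤ γ) (y : E) :
    cutoffPow γ ‖y‖ ≤ (ball 0 1).indicator (fun y => ENNReal.ofReal (‖y‖ ^ (-γ))) y + 1 := by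
  by_cases hy : y ∈ ball 0 1
  · rw [Set.indicator_of_mem hy, cutoffPow, ← ENNReal.ofReal_one,
      ← ENNReal.ofReal_add (by positivity) zero_le_one]
    exact ENNReal.ofReal_le_ofReal (max_le (le_add_of_nonneg_right zero_le_one)
      (le_add_of_nonneg_left (by positivity)))
  · rw [Set.indicator_of_notMem hy, zero_add, cutoffPow, ENNReal.ofReal_le_one]
    exact max_le (Real.rpow_le_one_of_one_le_of_nonpos (by simpa using hy) (neg_nonpos.2 hγ))
      le_rfl

lemma prod_cutoffPow_le_one_add_sum {ι : Type*} {s : Finset ι} (hs : #s ≤ 2) {u : ι → ℝ}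
    (hu : ∀ i, 0 ≤ u i) (γ : ℝ) :
    ∏ i ∈ s, cutoffPow γ (u i) ≤ 1 + ∑ i ∈ s, cutoffPow (2 * γ) (u i) := by
  simp_rw [← cutoffPow_sq (hu _)]
  obtain h | h | h : #s = 0 ∨ #s = 1 ∨ #s = 2 := by omega
  · simp [card_eq_zero.1 h]
  · obtain ⟨i, rfl⟩ := card_eq_one.1 h
    simpa using le_add_left (le_self_pow₀ (one_le_cutoffPow γ (u i)) two_ne_zero)
  · classical
    obtain ⟨i, j, hij, rfl⟩ := card_eq_two.1 h
    rw [prod_pair hij, sum_pair hij]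
    refine le_add_left ?_
    rcases le_total (cutoffPow γ (u i)) (cutoffPow γ (u j)) with h | h
    · exact le_add_left (by rw [sq]; gcongr)
    · exact le_add_right (by rw [sq]; gcongr)

lemma one_le_jb {d : ℕ} (y : EuclideanSpace ℝ (Fin d)) : 1 ≤ jb y :=
  Real.one_le_rpow (by nlinarith [sq_nonneg ‖y‖]) (by norm_num)

lemma decayWeight_le_one {d : ℕ} (y : EuclideanSpace ℝ (Fin d)) : decayWeight y ≤ 1 :=
  ENNReal.ofReal_le_one.2 <|
    Real.rpow_le_one_of_one_le_of_nonpos (one_le_jb y) (neg_nonpos.2 (by positivity))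

@[fun_prop]
lemma measurable_decayWeight {d : ℕ} : Measurable (decayWeight (d := d)) := by
  unfold decayWeight jb
  fun_prop

lemma weightMass_lt_top (d : ℕ) : weightMass d < ∞ := by
  have hint := integrable_rpow_neg_one_add_norm_sq (E := EuclideanSpace ℝ (Fin d))
    (μ := volume) (r := d + 1) (by simp)
  convert hint.lintegral_lt_top using 1
  refine lintegral_congr fun y => ?_
  rw [decayWeight, jb, ← Real.rpow_mul (by positivity)]
  ring_nf

lemma singularMass_lt_top {d : ℕ} {γ : ℝ} (hγ0 : 0 ≤ γ) (hγ : γ < d) : singularMass d γ < ∞ := by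
  have hd : 1 ≤ Module.finrank ℝ (EuclideanSpace ℝ (Fin d)) := by
    rw [finrank_euclideanSpace_fin]
    exact_mod_cast (hγ0.trans_lt hγ)
  have hint : IntegrableOn (fun y : EuclideanSpace ℝ (Fin d) => ‖y‖ ^ (-γ)) (ball 0 1) :=
    integrableOn_ball_of_norm_le_rpow (C := 1) hd (by simpa using hγ)
      (ae_of_all _ fun y => by simp [abs_of_nonneg (Real.rpow_nonneg (norm_nonneg y) _)])
      (measurable_norm.pow_const _).aestronglyMeasurable
  exact hint.lintegral_lt_top

lemma vertexBound_lt_top {d : ℕ} {γ : ℝ} (hγ0 : 0 ≤ γ) (hγ : γ < d / 2) : vertexBound d γ < ∞ := by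
  have := singularMass_lt_top (d := d) (by positivity : 0 ≤ 2 * γ) (by linarith)
  have := weightMass_lt_top d
  unfold vertexBound
  finiteness

lemma lintegral_cutoffPow_mul_decayWeight_le {d : ℕ} {γ : ℝ} (hγ : 0 ≤ γ)
    (a : EuclideanSpace ℝ (Fin d)) :
    ∫⁻ t, cutoffPow γ ‖t - a‖ * decayWeight t ≤ singularMass d γ + weightMass d := by
  set g := (ball (0 : EuclideanSpace ℝ (Fin d)) 1).indicator fun y => ENNReal.ofReal (‖y‖ ^ (-γ))
  calc ∫⁻ t, cutoffPow γ ‖t - a‖ * decayWeight t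
      ≤ ∫⁻ t, (g (t - a) + decayWeight t) := lintegral_mono fun t => by
        grw [cutoffPow_norm_le_indicator_add_one hγ, add_mul, one_mul,
          mul_le_of_le_one_right' (decayWeight_le_one t)]
    _ = singularMass d γ + weightMass d := by
        rw [lintegral_add_right _ measurable_decayWeight, lintegral_sub_right_eq_self,
          lintegral_indicator measurableSet_ball]
        rfl

lemma lintegral_prod_cutoffPow_mul_decayWeight_le {d : ℕ} {γ : ℝ} (hγ : 0 ≤ γ) {ι : Type*}
    {s : Finset ι} (hs : #s ≤ 2) (a : ι → EuclideanSpace ℝ (Fin d)) :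
    ∫⁻ t, (∏ i ∈ s, cutoffPow γ ‖t - a i‖) * decayWeight t ≤ vertexBound d γ := by
  calc ∫⁻ t, (∏ i ∈ s, cutoffPow γ ‖t - a i‖) * decayWeight t
      ≤ ∫⁻ t, (decayWeight t + ∑ i ∈ s, cutoffPow (2 * γ) ‖t - a i‖ * decayWeight t) :=
        lintegral_mono fun t => by
          grw [prod_cutoffPow_le_one_add_sum hs (fun i => norm_nonneg _), add_mul, one_mul,
            sum_mul]
    _ = weightMass d + ∑ i ∈ s, ∫⁻ t, cutoffPow (2 * γ) ‖t - a i‖ * decayWeight t := by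
        rw [lintegral_add_left measurable_decayWeight, lintegral_finsetSum' _
          fun i _ => by fun_prop]
        rfl
    _ ≤ weightMass d + ∑ _i ∈ s, (singularMass d (2 * γ) + weightMass d) := by
        gcongr with i
        exact lintegral_cutoffPow_mul_decayWeight_le (by positivity) (a i)
    _ ≤ weightMass d + 2 * (singularMass d (2 * γ) + weightMass d) := by
        rw [sum_const, nsmul_eq_mul]
        gcongr
        exact_mod_cast hs
    _ = vertexBound d γ := by
        rw [vertexBound]
        ring

section Graph

variable {ι : Type*} {d : ℕ}

noncomputable def graphIntegrand (γ : ℝ) (σ : ι → ι) (E A : Finset ι)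
    (y : ι → EuclideanSpace ℝ (Fin d)) : ℝ≥0∞ :=
  (∏ i ∈ E, cutoffPow γ ‖y i - y (σ i)‖) * ∏ i ∈ A, decayWeight (y i)

@[fun_prop]
lemma measurable_graphIntegrand (γ : ℝ) (σ : ι → ι) (E A : Finset ι) :
    Measurable (graphIntegrand (d := d) γ σ E A) := by
  unfold graphIntegrand
  fun_prop

variable [DecidableEq ι]

def incidentEdges (σ : ι → ι) (E : Finset ι) (v : ι) : Finset ι := {i ∈ E | i = v ∨ σ i = v}

lemma exists_card_incidentEdges_le_two (σ : ι → ι) {E A : Finset ι} (hEA : E ⊆ A)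
    (hA : A.Nonempty) : ∃ v ∈ A, #(incidentEdges σ E v) ≤ 2 := by
  -- Double counting: at least three incidences at every vertex, at most two on every edge.
  by_contra! h
  have hcount := card_nsmul_le_card_nsmul (s := A) (t := E) (r := fun v i => i = v ∨ σ i = v)
    (m := 3) (n := 2) (fun v hv => h v hv) fun i _ => by
      refine (card_le_card fun v hv => ?_).trans (card_le_two (a := i) (b := σ i))
      rcases (mem_bipartiteBelow _).1 hv |>.2 with rfl | rfl <;> simp
  have := card_le_card hEA
  have := hA.card_pos
  simp only [smul_eq_mul] at hcount
  omega

/-- `if i = v then σ i else i` is the endpoint of the edge `i` other than `v`. -/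
lemma graphIntegrand_update {γ : ℝ} {σ : ι → ι} (hσ : ∀ i, σ i ≠ i) {E A : Finset ι} {v : ι}
    (hv : v ∈ A) (z : ι → EuclideanSpace ℝ (Fin d)) (t : EuclideanSpace ℝ (Fin d)) :
    graphIntegrand γ σ E A (Function.update z v t) =
      ((∏ i ∈ incidentEdges σ E v, cutoffPow γ ‖t - z (if i = v then σ i else i)‖)
        * decayWeight t) * graphIntegrand γ σ {i ∈ E | ¬(i = v ∨ σ i = v)} (A.erase v) z := by
  have hedges : ∏ i ∈ E, cutoffPow γ ‖Function.update z v t i - Function.update z v t (σ i)‖ =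
      (∏ i ∈ incidentEdges σ E v, cutoffPow γ ‖t - z (if i = v then σ i else i)‖) *
        ∏ i ∈ {i ∈ E | ¬(i = v ∨ σ i = v)}, cutoffPow γ ‖z i - z (σ i)‖ := by
    rw [← prod_filter_mul_prod_filter_not E (fun i => i = v ∨ σ i = v)]
    congr 1
    · refine prod_congr rfl fun i hi => ?_
      rcases (mem_filter.1 hi).2 with rfl | hσi
      · simp [Function.update_of_ne (hσ i)]
      · have hiv : i ≠ v := fun h => hσ i (h ▸ hσi)
        simp [hiv, hσi, norm_sub_rev]
    · refine prod_congr rfl fun i hi => ?_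
      have hi' := (mem_filter.1 hi).2
      push Not at hi'
      rw [Function.update_of_ne hi'.1, Function.update_of_ne hi'.2]
  have hvertices : ∏ i ∈ A, decayWeight (Function.update z v t i) =
      decayWeight t * ∏ i ∈ A.erase v, decayWeight (z i) := by
    rw [← mul_prod_erase A _ hv, Function.update_self]
    congr 1
    exact prod_congr rfl fun i hi => by rw [Function.update_of_ne (ne_of_mem_erase hi)]
  rw [graphIntegrand, graphIntegrand, hedges, hvertices]
  ring

lemma lmarginal_graphIntegrand_le {γ : ℝ} (hγ : 0 ≤ γ) {σ : ι → ι} (hσ : ∀ i, σ i ≠ i)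
    (A : Finset ι) {E : Finset ι} (hEA : E ⊆ A) (x : ι → EuclideanSpace ℝ (Fin d)) :
    (∫⋯∫⁻_A, graphIntegrand γ σ E A ∂fun _ => volume) x ≤ vertexBound d γ ^ #A := by
  induction A using Finset.strongInduction generalizing E x with
  | H A ih =>
  rcases A.eq_empty_or_nonempty with rfl | hA
  · simp [graphIntegrand, subset_empty.1 hEA]
  obtain ⟨v, hv, hdeg⟩ := exists_card_incidentEdges_le_two σ hEA hA
  set E' := {i ∈ E | ¬(i = v ∨ σ i = v)}
  have hstep : ∀ z : ι → EuclideanSpace ℝ (Fin d),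
      ∫⁻ t, graphIntegrand γ σ E A (Function.update z v t) ≤
        vertexBound d γ * graphIntegrand γ σ E' (A.erase v) z := fun z => by
    simp_rw [graphIntegrand_update hσ hv]
    rw [lintegral_mul_const]
    · gcongr
      exact lintegral_prod_cutoffPow_mul_decayWeight_le hγ hdeg _
    · exact (measurable_prod _ fun i _ => (measurable_cutoffPow γ).comp
        (measurable_id.sub_const _).norm).mul measurable_decayWeight
  have hE' : E' ⊆ A.erase v := fun i hi => by
    have hi' := mem_filter.1 hi
    exact mem_erase.2 ⟨fun h => hi'.2 (Or.inl h), hEA hi'.1⟩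
  calc (∫⋯∫⁻_A, graphIntegrand γ σ E A ∂fun _ => volume) x
      ≤ (∫⋯∫⁻_A.erase v, (fun z => vertexBound d γ * graphIntegrand γ σ E' (A.erase v) z)
          ∂fun _ => volume) x := by
        rw [lmarginal_erase' _ (by fun_prop) hv]
        exact lmarginal_mono hstep x
    _ = vertexBound d γ * (∫⋯∫⁻_A.erase v, graphIntegrand γ σ E' (A.erase v) ∂fun _ => volume) x :=
        lintegral_const_mul _ ((measurable_graphIntegrand _ _ _ _).comp measurable_updateFinset)
    _ ≤ vertexBound d γ * vertexBound d γ ^ #(A.erase v) := by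
        gcongr
        exact ih _ (erase_ssubset hv) hE' x
    _ = vertexBound d γ ^ #A := by rw [← pow_succ', card_erase_add_one hv]

lemma lintegral_graphIntegrand_le [Fintype ι] {γ : ℝ} (hγ : 0 ≤ γ) {σ : ι → ι}
    (hσ : ∀ i, σ i ≠ i) :
    ∫⁻ x, graphIntegrand (d := d) γ σ univ univ x ≤ vertexBound d γ ^ Fintype.card ι := by
  rw [volume_pi, lintegral_eq_lmarginal_univ 0]
  exact lmarginal_graphIntegrand_le hγ hσ univ subset_rfl 0

end Graph

section NearestNeighbor

variable {ι : Type*} [Fintype ι] [DecidableEq ι] {d : ℕ}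

noncomputable def nearestNeighborMajorant (γ : ℝ) (x : ι → EuclideanSpace ℝ (Fin d)) : ℝ≥0∞ :=
  (∏ i, ∑ j ∈ univ.erase i, cutoffPow γ ‖x i - x j‖) * ∏ i, decayWeight (x i)

@[fun_prop]
lemma measurable_nearestNeighborMajorant (γ : ℝ) :
    Measurable (nearestNeighborMajorant (ι := ι) (d := d) γ) := by
  unfold nearestNeighborMajorant
  fun_prop

lemma lintegral_nearestNeighborMajorant_le {γ : ℝ} (hγ : 0 ≤ γ) :
    ∫⁻ x, nearestNeighborMajorant (ι := ι) (d := d) γ x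
      ≤ (((Fintype.card ι - 1 : ℕ) : ℝ≥0∞) * vertexBound d γ) ^ Fintype.card ι := by
  have hcard : #(Fintype.piFinset fun i : ι => univ.erase i) =
      (Fintype.card ι - 1) ^ Fintype.card ι := by
    simp [Fintype.card_piFinset, card_erase_of_mem]
  simp_rw [nearestNeighborMajorant, prod_univ_sum, sum_mul]
  rw [lintegral_finsetSum' _ fun σ _ => by fun_prop, mul_pow, ← Nat.cast_pow, ← hcard,
    ← nsmul_eq_mul, ← sum_const]
  exact sum_le_sum fun σ hσ =>
    lintegral_graphIntegrand_le hγ fun i => ne_of_mem_erase (Fintype.mem_piFinset.1 hσ i)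

end NearestNeighbor

lemma exists_nnd_eq {d p : ℕ} (hp : 2 ≤ p) (x : Fin p → EuclideanSpace ℝ (Fin d)) (i : Fin p) :
    ∃ j ≠ i, nnd x i = ‖x i - x j‖ := by
  have : Nontrivial (Fin p) := Fin.nontrivial_iff_two_le.2 hp
  obtain ⟨j, hj⟩ := exists_ne i
  set D := {r : ℝ | ∃ j : Fin p, j ≠ i ∧ r = ‖x i - x j‖}
  have hfin : D.Finite :=
    (Set.finite_range fun j => ‖x i - x j‖).subset fun r ⟨j, _, hr⟩ => ⟨j, hr.symm⟩
  have hne : D.Nonempty := ⟨_, j, hj, rfl⟩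
  exact hne.csInf_mem hfin

lemma ofReal_nnd_rpow_neg_le {d p : ℕ} (hp : 2 ≤ p) {β γ : ℝ} (hβ : 0 ≤ β) (hβγ : β ≤ γ)
    (x : Fin p → EuclideanSpace ℝ (Fin d)) (i : Fin p) :
    ENNReal.ofReal (nnd x i ^ (-β)) ≤ ∑ j ∈ univ.erase i, cutoffPow γ ‖x i - x j‖ := by
  obtain ⟨j, hj, hnnd⟩ := exists_nnd_eq hp x i
  rw [hnnd]
  exact (ofReal_rpow_neg_le_cutoffPow (norm_nonneg _) hβ hβγ).trans
    (single_le_sum (f := fun j => cutoffPow γ ‖x i - x j‖) (fun _ _ => zero_le)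
      (mem_erase.2 ⟨hj, mem_univ j⟩))

lemma prod_jb_rpow_le {ι : Type*} [Fintype ι] {d : ℕ} (x : ι → EuclideanSpace ℝ (Fin d))
    {s : ℝ} (hs : 0 ≤ s) :
    ∏ i, jb (x i) ^ s ≤ ((1 + ∑ i, ‖x i‖ ^ 2) ^ ((1 : ℝ) / 2)) ^ (Fintype.card ι * s) := by
  have hjb : ∀ i, jb (x i) ≤ (1 + ∑ j, ‖x j‖ ^ 2) ^ ((1 : ℝ) / 2) := fun i => by
    unfold jb
    gcongr
    exact single_le_sum (fun j _ => sq_nonneg ‖x j‖) (mem_univ i)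
  calc ∏ i, jb (x i) ^ s ≤ ∏ _i : ι, ((1 + ∑ i, ‖x i‖ ^ 2) ^ ((1 : ℝ) / 2)) ^ s :=
        prod_le_prod (fun i _ => by unfold jb; positivity) fun i _ =>
          Real.rpow_le_rpow (by unfold jb; positivity) (hjb i) hs
    _ = _ := by
        rw [prod_const, card_univ, ← Real.rpow_natCast, ← Real.rpow_mul (by positivity),
          mul_comm]

lemma mul_prod_jb_rpow_le {p d : ℕ} (k : ℕ) (x : Fin p → EuclideanSpace ℝ (Fin d)) {a S : ℝ}
    (ha : 0 ≤ a)
    (haS : ((1 + ∑ i, ‖x i‖ ^ 2) ^ ((1 : ℝ) / 2)) ^ ((p * (k + d + 1) : ℕ) : ℝ) * a ≤ S) :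
    a * ∏ i, jb (x i) ^ (k : ℝ) ≤ S * ∏ i, jb (x i) ^ (-((d : ℝ) + 1)) := by
  have hsplit : ∏ i, jb (x i) ^ (k : ℝ) =
      (∏ i, jb (x i) ^ ((k : ℝ) + d + 1)) * ∏ i, jb (x i) ^ (-((d : ℝ) + 1)) := by
    rw [← prod_mul_distrib]
    refine prod_congr rfl fun i _ => ?_
    rw [← Real.rpow_add (zero_lt_one.trans_le (one_le_jb _))]
    ring_nf
  have hbracket := prod_jb_rpow_le x (s := (k : ℝ) + d + 1) (by positivity)
  rw [Fintype.card_fin] at hbracket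
  rw [hsplit, ← mul_assoc]
  gcongr
  · exact prod_nonneg fun i _ => by unfold jb; positivity
  · calc a * ∏ i, jb (x i) ^ ((k : ℝ) + d + 1)
        ≤ a * ((1 + ∑ i, ‖x i‖ ^ 2) ^ ((1 : ℝ) / 2)) ^ (p * ((k : ℝ) + d + 1)) :=
          mul_le_mul_of_nonneg_left hbracket ha
      _ = ((1 + ∑ i, ‖x i‖ ^ 2) ^ ((1 : ℝ) / 2)) ^ ((p * (k + d + 1) : ℕ) : ℝ) * a := by
        push_cast
        ring
      _ ≤ S := haS

lemma ofReal_mul_le_of_nnd_bound {d p k : ℕ} (hp : 2 ≤ p) {K : ℝ} (hK : 0 ≤ K)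
    {β : Fin p → ℝ} {γ : ℝ} (hβ0 : ∀ i, 0 ≤ β i) (hβγ : ∀ i, β i ≤ γ)
    (x : Fin p → EuclideanSpace ℝ (Fin d)) {a b S : ℝ} (ha : 0 ≤ a)
    (haS : ((1 + ∑ i, ‖x i‖ ^ 2) ^ ((1 : ℝ) / 2)) ^ ((p * (k + d + 1) : ℕ) : ℝ) * a ≤ S)
    (hb : b ≤ K * (∏ i, jb (x i) ^ (k : ℝ)) * ∏ i, nnd x i ^ (-(β i))) :
    ENNReal.ofReal (a * b) ≤ ENNReal.ofReal (S * K) * nearestNeighborMajorant γ x := by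
  have hS : 0 ≤ S :=
    (mul_nonneg (Real.rpow_nonneg (Real.rpow_nonneg (by positivity) _) _) ha).trans haS
  have hjb : ∀ i, 0 ≤ jb (x i) := fun i => zero_le_one.trans (one_le_jb _)
  have hnnd : ∀ i, 0 ≤ nnd x i ^ (-(β i)) := fun i =>
    Real.rpow_nonneg (Real.sInf_nonneg fun r hr => by obtain ⟨_, _, rfl⟩ := hr; positivity) _
  have hprod_nnd : 0 ≤ ∏ i, nnd x i ^ (-(β i)) := prod_nonneg fun i _ => hnnd i
  calc ENNReal.ofReal (a * b)
      ≤ ENNReal.ofReal (S * K * ((∏ i, jb (x i) ^ (-((d : ℝ) + 1))) * ∏ i, nnd x i ^ (-(β i)))) :=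
        ENNReal.ofReal_le_ofReal <| calc
          a * b ≤ a * (K * (∏ i, jb (x i) ^ (k : ℝ)) * ∏ i, nnd x i ^ (-(β i))) := by gcongr
          _ = K * (a * ∏ i, jb (x i) ^ (k : ℝ)) * ∏ i, nnd x i ^ (-(β i)) := by ring
          _ ≤ K * (S * ∏ i, jb (x i) ^ (-((d : ℝ) + 1))) * ∏ i, nnd x i ^ (-(β i)) :=
            mul_le_mul_of_nonneg_right
              (mul_le_mul_of_nonneg_left (mul_prod_jb_rpow_le k x ha haS) hK) hprod_nnd
          _ = _ := by ring
    _ = ENNReal.ofReal (S * K) *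
          ((∏ i, decayWeight (x i)) * ∏ i, ENNReal.ofReal (nnd x i ^ (-(β i)))) := by
        rw [ENNReal.ofReal_mul (by positivity),
          ENNReal.ofReal_mul (prod_nonneg fun i _ => Real.rpow_nonneg (hjb i) _),
          ENNReal.ofReal_prod_of_nonneg fun i _ => Real.rpow_nonneg (hjb i) _,
          ENNReal.ofReal_prod_of_nonneg fun i _ => hnnd i]
        rfl
    _ ≤ ENNReal.ofReal (S * K) * nearestNeighborMajorant γ x := by
        rw [nearestNeighborMajorant, mul_comm (∏ i, decayWeight (x i))]
        gcongr with i
        exact ofReal_nnd_rpow_neg_le hp (hβ0 i) (hβγ i) x i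

theorem stmt9_general (d p k : ℕ) (hp : 2 ≤ p) (K : ℝ) (hK : 0 < K)
    (β : Fin p → ℝ) (hβ0 : ∀ i, 0 ≤ β i) (hβ : ∀ i, β i < (d : ℝ) / 2)
    (F : (Fin p → EuclideanSpace ℝ (Fin d)) → ℝ)
    (hF : ∀ x : Fin p → EuclideanSpace ℝ (Fin d), Function.Injective x →
      |F x| ≤ K * (∏ i, jb (x i) ^ (k : ℝ)) * ∏ i, nnd x i ^ (-(β i))) :
    ∃ C : ℝ, 0 < C ∧
      ∀ (f : (Fin p → EuclideanSpace ℝ (Fin d)) → ℝ) (S : ℝ), Measurable f →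
        (∀ x : Fin p → EuclideanSpace ℝ (Fin d),
          ((1 + ∑ i, ‖x i‖ ^ 2) ^ ((1 : ℝ) / 2)) ^ ((p * (k + d + 1) : ℕ) : ℝ) * |f x| ≤ S) →
        (∫⁻ x in {x : Fin p → EuclideanSpace ℝ (Fin d) | Function.Injective x},
          ENNReal.ofReal (|f x| * |F x|)) ≤ ENNReal.ofReal (C * S) := by
  have : Nonempty (Fin p) := ⟨⟨0, by omega⟩⟩
  obtain ⟨i₀, hβmax⟩ := Finite.exists_max β
  set γ := β i₀
  set T : ℝ≥0∞ := (((p - 1 : ℕ) : ℝ≥0∞) * vertexBound d γ) ^ p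
  have hT : T ≠ ∞ := by
    have := vertexBound_lt_top (hβ0 i₀) (hβ i₀)
    finiteness
  refine ⟨K * (T.toReal + 1), by positivity, fun f S _ hfS => ?_⟩
  have hS : 0 ≤ S :=
    (mul_nonneg (Real.rpow_nonneg (Real.rpow_nonneg (by positivity) _) _) (abs_nonneg _)).trans
      (hfS 0)
  calc ∫⁻ x in {x | Function.Injective x}, ENNReal.ofReal (|f x| * |F x|)
      ≤ ∫⁻ x in {x | Function.Injective x}, ENNReal.ofReal (S * K) * nearestNeighborMajorant γ x :=
        setLIntegral_mono (by fun_prop) fun x hx =>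
          ofReal_mul_le_of_nnd_bound hp hK.le hβ0 hβmax x (abs_nonneg _) (hfS x) (hF x hx)
    _ ≤ ∫⁻ x, ENNReal.ofReal (S * K) * nearestNeighborMajorant γ x :=
        setLIntegral_le_lintegral _ _
    _ ≤ ENNReal.ofReal (S * K) * T := by
        rw [lintegral_const_mul _ (by fun_prop)]
        gcongr
        have := lintegral_nearestNeighborMajorant_le (ι := Fin p) (d := d) (hβ0 i₀)
        rwa [Fintype.card_fin] at this
    _ ≤ ENNReal.ofReal (S * K) * ENNReal.ofReal (T.toReal + 1) := by
        gcongr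
        rw [ENNReal.le_ofReal_iff_toReal_le hT (by positivity)]
        linarith
    _ = ENNReal.ofReal (K * (T.toReal + 1) * S) := by
        rw [← ENNReal.ofReal_mul (by positivity)]
        ring_nf

/-- If a measurable `F` satisfies the factorized nearest neighbor bound
`|F(x)| ≤ K ∏ᵢ ⟨xᵢ⟩^k ∏ᵢ (min_{j≠i}|xᵢ−xⱼ|)^{-βᵢ}` on `Conf_p`, with `βᵢ ∈ [0,d/2)`,
then there is `C > 0` such that for every measurable `f` whose weighted sup
`sup_x ⟨x⟩^{p(k+d+1)} |f(x)|` is bounded by `S`, one has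
`∫_{Conf_p} |f| |F| ≤ C · S`.  Here `⟨x⟩` for `x ∈ ℝ^{pd}` is `(1 + ∑ᵢ |xᵢ|²)^{1/2}`. -/
theorem stmt9 (d p k : ℕ) (hd : 0 < d) (hp : 2 ≤ p) (K : ℝ) (hK : 0 < K)
    (β : Fin p → ℝ) (hβ0 : ∀ i, 0 ≤ β i) (hβ : ∀ i, β i < (d : ℝ) / 2)
    (F : (Fin p → EuclideanSpace ℝ (Fin d)) → ℝ) (hFm : Measurable F)
    (hF : ∀ x : Fin p → EuclideanSpace ℝ (Fin d), Function.Injective x →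
      |F x| ≤ K * (∏ i, jb (x i) ^ (k : ℝ)) * ∏ i, nnd x i ^ (-(β i))) :
    ∃ C : ℝ, 0 < C ∧
      ∀ (f : (Fin p → EuclideanSpace ℝ (Fin d)) → ℝ) (S : ℝ), Measurable f →
        (∀ x : Fin p → EuclideanSpace ℝ (Fin d),
          ((1 + ∑ i, ‖x i‖ ^ 2) ^ ((1 : ℝ) / 2)) ^ ((p * (k + d + 1) : ℕ) : ℝ) * |f x| ≤ S) →
        (∫⁻ x in {x : Fin p → EuclideanSpace ℝ (Fin d) | Function.Injective x},
          ENNReal.ofReal (|f x| * |F x|)) ≤ ENNReal.ofReal (C * S) :=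
  stmt9_general d p k hp K hK β hβ0 hβ F hF
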